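/- arXiv:2311.00944 — 2 statements merged into one kernel-verified Lean document; each statement's English description precedes it below -/
import Mathlib

section
/- Let p = 2l, 0 < η_x ≤ 1/(1000l), η_y = η_x/256, and 0 < β ≤ η_y·l/80000. Given x, z ∈ ℝ^{d1} and y ∈ Y, set x' := x − η_x(∇_x f(x,y) + p(x − z)), y' := P_Y(y + η_y∇_y f(x,y)), z' := z + β(x' − z), and y⁺(z) := P_Y(y + η_y∇_y f(x*(y,z), y)). Then V(x,y,z) − V(x',y',z') ≥ (η_x/64)‖∇_x f̂(x,y,z)‖² + (1/(64η_y))‖y⁺(z) − y‖² + (pβ/16)‖x − z‖² − 48pβ‖x*(z) − x*(y⁺(z),z)‖². -/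
/-!
Split `V(x, y, z) - V(x', y', z')` into a primal part `f̂(x, y, z) - f̂(x', y, z)`, a dual part
`f̂(x', y, z) - f̂(x', y', z) + 2 (Ψ(y', z) - Ψ(y, z))` and a proximal part collecting the changes
in `z`. With `p = 2l`, `f̂(·, y, z)` and `Φ(·, z)` are `l`-strongly convex, so their minimizers
are `1`-Lipschitz in `y` and `2`-Lipschitz in `z`, and `x` lies within `‖∇ₓ f̂(x, y, z)‖ / l` of
`x*(y, z)`. The primal part is the descent of a gradient step on the `3l`-smooth `f̂(·, y, z)`.
The dual part is the ascent of a projected gradient step on `Ψ(·, z)`, whose gradient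
`∇_y f(x*(y, z), y)` is replaced by `∇_y f(x, y)` at a cost of `O(‖∇ₓ f̂‖)`. In the proximal part
`f̂(x', y', ·)` decreases by about `2lβ ‖x' - z‖²`, while the changes of `Ψ(y', ·)` and `P` cancel
up to `p ‖z' - z‖ ‖x*(y', z') - x*(ŷ*(z'), z)‖`; the Lipschitz bounds reduce this distance to
`6 ‖z' - z‖ + ‖x*(z) - x*(y⁺(z), z)‖ + η_y ‖∇ₓ f̂‖`. Since `η_x` and `β` are small, elementary
scalar estimates absorb all error terms.
-/

open Set Metric
open scoped RealInnerProductSpace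

noncomputable def gradx {d1 d2 : ℕ}
    (f : EuclideanSpace ℝ (Fin d1) → EuclideanSpace ℝ (Fin d2) → ℝ)
    (x : EuclideanSpace ℝ (Fin d1)) (y : EuclideanSpace ℝ (Fin d2)) :
    EuclideanSpace ℝ (Fin d1) :=
  gradient (fun x' => f x' y) x

noncomputable def grady {d1 d2 : ℕ}
    (f : EuclideanSpace ℝ (Fin d1) → EuclideanSpace ℝ (Fin d2) → ℝ)
    (x : EuclideanSpace ℝ (Fin d1)) (y : EuclideanSpace ℝ (Fin d2)) :
    EuclideanSpace ℝ (Fin d2) :=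
  gradient (fun y' => f x y') y

/-- `f` is differentiable and `l`-smooth: the gradient is `l`-Lipschitz with respect to the
Euclidean norm on the product space (stated in squared form). -/
def IsLSmooth {d1 d2 : ℕ} (l : ℝ)
    (f : EuclideanSpace ℝ (Fin d1) → EuclideanSpace ℝ (Fin d2) → ℝ) : Prop :=
  Differentiable ℝ (fun w : EuclideanSpace ℝ (Fin d1) × EuclideanSpace ℝ (Fin d2) => f w.1 w.2) ∧
  ∀ x₁ x₂ y₁ y₂,
    ‖gradx f x₁ y₁ - gradx f x₂ y₂‖ ^ 2 + ‖grady f x₁ y₁ - grady f x₂ y₂‖ ^ 2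
      ≤ l ^ 2 * (‖x₁ - x₂‖ ^ 2 + ‖y₁ - y₂‖ ^ 2)

/-- `f̂(x, y, z) = f(x, y) + (p/2)‖x − z‖²`. -/
noncomputable def fhat {d1 d2 : ℕ}
    (f : EuclideanSpace ℝ (Fin d1) → EuclideanSpace ℝ (Fin d2) → ℝ) (p : ℝ)
    (x : EuclideanSpace ℝ (Fin d1)) (y : EuclideanSpace ℝ (Fin d2))
    (z : EuclideanSpace ℝ (Fin d1)) : ℝ :=
  f x y + p / 2 * ‖x - z‖ ^ 2

open Filter Topology

section Gradient

variable {E : Type*} [NormedAddCommGroup E] [InnerProductSpace ℝ E] [CompleteSpace E]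
  {φ ψ : E → ℝ} {g : E → E} {φ' ψ' x : E}

theorem HasGradientAt.add (hφ : HasGradientAt φ φ' x) (hψ : HasGradientAt ψ ψ' x) :
    HasGradientAt (fun x => φ x + ψ x) (φ' + ψ') x := by
  rw [hasGradientAt_iff_hasFDerivAt, map_add]
  exact hφ.hasFDerivAt.add hψ.hasFDerivAt

theorem HasGradientAt.sub (hφ : HasGradientAt φ φ' x) (hψ : HasGradientAt ψ ψ' x) :
    HasGradientAt (fun x => φ x - ψ x) (φ' - ψ') x := by
  rw [hasGradientAt_iff_hasFDerivAt, map_sub]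
  exact hφ.hasFDerivAt.sub hψ.hasFDerivAt

theorem hasGradientAt_mul_norm_sub_sq (c : ℝ) (z x : E) :
    HasGradientAt (fun x => c * ‖x - z‖ ^ 2) ((2 * c) • (x - z)) x := by
  have h : HasFDerivAt (fun x => c * ‖x - z‖ ^ 2) _ x :=
    ((hasStrictFDerivAt_norm_sq (x - z)).hasFDerivAt.comp x
      ((hasFDerivAt_id x).sub_const z)).const_mul c
  rw [hasGradientAt_iff_hasFDerivAt]
  refine h.congr_fderiv ?_
  ext v
  simp only [ContinuousLinearMap.comp_id, smul_apply, coe_innerSL_apply,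
    InnerProductSpace.toDual_apply_apply, real_inner_smul_left, nsmul_eq_mul, smul_eq_mul]
  ring

theorem IsLocalMin.hasGradientAt_eq_zero (h : IsLocalMin φ x) (hφ : HasGradientAt φ φ' x) :
    φ' = 0 := by
  simpa using h.hasFDerivAt_eq_zero hφ.hasFDerivAt

theorem HasGradientAt.hasDerivAt_comp_add_smul {a v : E} {t : ℝ}
    (hφ : HasGradientAt φ φ' (a + t • v)) :
    HasDerivAt (fun s : ℝ => φ (a + s • v)) ⟪φ', v⟫ t := by
  have hline : HasDerivAt (fun s : ℝ => a + s • v) v t := by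
    simpa using ((hasDerivAt_id t).smul_const v).const_add a
  simpa [Function.comp_def] using hφ.hasFDerivAt.comp_hasDerivAt t hline

theorem abs_sub_sub_inner_le_of_norm_gradient_sub_le {a b c : E} {C : ℝ}
    (hφ : ∀ x ∈ segment ℝ a b, HasGradientAt φ (g x) x)
    (hC : ∀ x ∈ segment ℝ a b, ‖g x - c‖ ≤ C) :
    |φ b - φ a - ⟪c, b - a⟫| ≤ C * ‖b - a‖ := by
  have h := (convex_segment a b).norm_image_sub_le_of_norm_hasFDerivWithin_le'
    (f' := fun x => InnerProductSpace.toDual ℝ E (g x))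
    (φ := InnerProductSpace.toDual ℝ E c)
    (fun x hx => (hφ x hx).hasFDerivAt.hasFDerivWithinAt)
    (fun x hx => by rw [← map_sub, LinearIsometryEquiv.norm_map]; exact hC x hx)
    (left_mem_segment ℝ a b) (right_mem_segment ℝ a b)
  simpa using h

theorem abs_sub_sub_inner_le_of_lipschitz_gradient {L : ℝ} (hL : 0 ≤ L)
    (hφ : ∀ x, HasGradientAt φ (g x) x) (hg : ∀ u v, ‖g u - g v‖ ≤ L * ‖u - v‖) (a b : E) :
    |φ b - φ a - ⟪g a, b - a⟫| ≤ L * ‖b - a‖ ^ 2 := by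
  have hC : ∀ x ∈ segment ℝ a b, ‖g x - g a‖ ≤ L * ‖b - a‖ := fun x hx => by
    have hx := dist_add_dist_of_mem_segment hx
    rw [dist_comm a x, dist_comm a b] at hx
    simp only [dist_eq_norm] at hx
    nlinarith [hg x a, norm_nonneg (x - b)]
  have h := abs_sub_sub_inner_le_of_norm_gradient_sub_le (fun x _ => hφ x) hC
  linarith

theorem sub_gradient_step_ge {L : ℝ} (hL : 0 ≤ L) (hφ : ∀ x, HasGradientAt φ (g x) x)
    (hg : ∀ u v, ‖g u - g v‖ ≤ L * ‖u - v‖) (x : E) (η : ℝ) :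
    η * ‖g x‖ ^ 2 - L * η ^ 2 * ‖g x‖ ^ 2 ≤ φ x - φ (x - η • g x) := by
  have h := (abs_le.1 (abs_sub_sub_inner_le_of_lipschitz_gradient hL hφ hg x (x - η • g x))).2
  simp only [sub_sub_cancel_left, inner_neg_right, real_inner_smul_right,
    real_inner_self_eq_norm_sq, norm_neg, norm_smul, Real.norm_eq_abs, mul_pow, sq_abs] at h
  linarith

end Gradient

section StrongConvexity

variable {E : Type*} [NormedAddCommGroup E] [InnerProductSpace ℝ E] {φ : E → ℝ} {m : ℝ}

theorem strongConvexOn_univ_of_hasGradientAt [CompleteSpace E] {g : E → E}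
    (hφ : ∀ x, HasGradientAt φ (g x) x) (hg : ∀ a b, m * ‖a - b‖ ^ 2 ≤ ⟪g a - g b, a - b⟫) :
    StrongConvexOn univ m φ := by
  refine ⟨convex_univ, fun x _ y _ a b ha hb hab => ?_⟩
  set d := x - y
  -- on the line through `y` and `x`, `φ - m/2 ‖·‖²` has a monotone derivative
  set h' : ℝ → ℝ := fun s => ⟪g (y + s • d), d⟫ - m * s * ‖d‖ ^ 2
  have hh : ∀ s, HasDerivAt (fun s => φ (y + s • d) - m / 2 * s ^ 2 * ‖d‖ ^ 2) (h' s) s :=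
    fun s => (hφ _).hasDerivAt_comp_add_smul.sub <|
      (((hasDerivAt_pow 2 s).const_mul (m / 2)).mul_const _).congr_deriv (by ring)
  have hmono : Monotone h' := by
    intro s t hst
    have hgt := hg (y + t • d) (y + s • d)
    rw [show y + t • d - (y + s • d) = (t - s) • d by module, real_inner_smul_right, norm_smul,
      Real.norm_eq_abs, abs_of_nonneg (sub_nonneg.2 hst), inner_sub_left] at hgt
    rcases hst.eq_or_lt with rfl | hlt
    · exact le_rfl
    · simp only [h']
      nlinarith [sub_pos.2 hlt]
  have hconv := Monotone.convexOn_univ_of_deriv (fun s => (hh s).differentiableAt)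
    (by rwa [funext fun s => (hh s).deriv])
  have key := hconv.2 (mem_univ 1) (mem_univ 0) ha hb hab
  obtain rfl : b = 1 - a := by linarith
  simp only [smul_eq_mul, mul_one, mul_zero, add_zero, one_smul, zero_smul, one_pow,
    zero_pow two_ne_zero] at key
  rw [show y + a • d = a • x + (1 - a) • y by module, show y + d = x by module] at key
  simp only [smul_eq_mul]
  linarith

theorem StrongConvexOn.add_norm_sub_sq_le_of_isMinOn {s : Set E} {u x : E}
    (hφ : StrongConvexOn s m φ) (hu : IsMinOn φ s u) (hus : u ∈ s) (hx : x ∈ s) :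
    φ u + m / 2 * ‖x - u‖ ^ 2 ≤ φ x := by
  -- compare `u` with the points `t • x + (1 - t) • u` and let `t → 0`
  have key : ∀ t ∈ Ioo (0 : ℝ) 1, φ u + (1 - t) * (m / 2 * ‖x - u‖ ^ 2) ≤ φ x := by
    intro t ht
    have hmem := hφ.1 hx hus ht.1.le (sub_nonneg.2 ht.2.le) (add_sub_cancel t 1)
    have hconv := hφ.2 hx hus ht.1.le (sub_nonneg.2 ht.2.le) (add_sub_cancel t 1)
    have hmin := isMinOn_iff.1 hu _ hmem
    simp only [smul_eq_mul] at hconv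
    exact le_of_mul_le_mul_left (by linarith) ht.1
  have hlim : Tendsto (fun t => φ u + (1 - t) * (m / 2 * ‖x - u‖ ^ 2)) (𝓝[>] 0)
      (𝓝 (φ u + (1 - 0) * (m / 2 * ‖x - u‖ ^ 2))) :=
    ((continuous_const.add ((continuous_const.sub continuous_id).mul continuous_const)).tendsto
      0).mono_left nhdsWithin_le_nhds
  simpa using le_of_tendsto hlim (Filter.eventually_of_mem (Ioo_mem_nhdsGT one_pos) key)

theorem strongConvexOn_of_isGreatest_image {ι : Type*} {F : ι → E → ℝ} {S : Set ι}
    {s : Set E} (hs : Convex ℝ s) (hF : ∀ i ∈ S, StrongConvexOn s m (F i))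
    (hφ : ∀ x ∈ s, IsGreatest ((fun i => F i x) '' S) (φ x)) : StrongConvexOn s m φ := by
  refine ⟨hs, fun x hx y hy a b ha hb hab => ?_⟩
  obtain ⟨i, hi, hφi⟩ := (hφ _ (hs hx hy ha hb hab)).1
  have hconv := (hF i hi).2 hx hy ha hb hab
  have hx' := mul_le_mul_of_nonneg_left ((hφ x hx).2 ⟨i, hi, rfl⟩) ha
  have hy' := mul_le_mul_of_nonneg_left ((hφ y hy).2 ⟨i, hi, rfl⟩) hb
  simp only [smul_eq_mul] at hconv ⊢
  linarith

theorem StrongConvexOn.mul_norm_sub_le_of_isMinOn {φ₁ φ₂ : E → ℝ} {u₁ u₂ : E} {L : ℝ}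
    (h₁ : StrongConvexOn univ m φ₁) (h₂ : StrongConvexOn univ m φ₂) (hu₁ : IsMinOn φ₁ univ u₁)
    (hu₂ : IsMinOn φ₂ univ u₂) (hL : 0 ≤ L)
    (hdiff : ∀ a b, |(φ₁ a - φ₂ a) - (φ₁ b - φ₂ b)| ≤ L * ‖a - b‖) :
    m * ‖u₁ - u₂‖ ≤ L := by
  have q₁ := h₁.add_norm_sub_sq_le_of_isMinOn hu₁ (mem_univ _) (mem_univ u₂)
  have q₂ := h₂.add_norm_sub_sq_le_of_isMinOn hu₂ (mem_univ _) (mem_univ u₁)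
  have hd := (abs_le.1 (hdiff u₂ u₁)).2
  rw [norm_sub_rev u₂ u₁] at q₁ hd
  rcases (norm_nonneg (u₁ - u₂)).eq_or_lt with h0 | h0
  · rw [← h0, mul_zero]
    exact hL
  · exact le_of_mul_le_mul_right (by linarith) h0

end StrongConvexity

theorem abs_norm_sub_sq_sub_norm_sub_sq_sub_le {E : Type*} [NormedAddCommGroup E]
    [InnerProductSpace ℝ E] (a b z₁ z₂ : E) :
    |(‖a - z₁‖ ^ 2 - ‖a - z₂‖ ^ 2) - (‖b - z₁‖ ^ 2 - ‖b - z₂‖ ^ 2)|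
      ≤ 2 * ‖a - b‖ * ‖z₁ - z₂‖ := by
  have h : (‖a - z₁‖ ^ 2 - ‖a - z₂‖ ^ 2) - (‖b - z₁‖ ^ 2 - ‖b - z₂‖ ^ 2)
      = 2 * ⟪a - b, z₂ - z₁⟫ := by
    simp only [norm_sub_sq_real, inner_sub_left, inner_sub_right]
    ring
  rw [h, abs_mul, abs_two, mul_assoc, norm_sub_rev z₁ z₂]
  gcongr
  exact abs_real_inner_le_norm _ _

section Projection

variable {E : Type*} [NormedAddCommGroup E] [InnerProductSpace ℝ E] {Y : Set E} {P : E → E}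

theorem inner_sub_proj_sub_proj_nonpos (hY : Convex ℝ Y) (hPY : ∀ v, P v ∈ Y)
    (hP : ∀ v, ∀ w ∈ Y, ‖v - P v‖ ≤ ‖v - w‖) (v : E) : ∀ w ∈ Y, ⟪v - P v, w - P v⟫ ≤ 0 := by
  have : Nonempty Y := ⟨⟨P v, hPY v⟩⟩
  have hbdd : BddBelow (range fun w : Y => ‖v - w‖) := ⟨0, by
    rintro _ ⟨w, rfl⟩
    exact norm_nonneg _⟩
  exact (norm_eq_iInf_iff_real_inner_le_zero hY (hPY v)).1
    (le_antisymm (le_ciInf fun w => hP v w w.2) (ciInf_le hbdd ⟨P v, hPY v⟩))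

theorem norm_proj_sub_proj_le (hVI : ∀ v, ∀ w ∈ Y, ⟪v - P v, w - P v⟫ ≤ 0)
    (hPY : ∀ v, P v ∈ Y) (v₁ v₂ : E) : ‖P v₁ - P v₂‖ ≤ ‖v₁ - v₂‖ := by
  have h₁ := hVI v₁ _ (hPY v₂)
  have h₂ := hVI v₂ _ (hPY v₁)
  have key : ‖P v₁ - P v₂‖ ^ 2 ≤ ⟪v₁ - v₂, P v₁ - P v₂⟫ := by
    rw [← real_inner_self_eq_norm_sq]
    simp only [inner_sub_left, inner_sub_right, real_inner_comm] at h₁ h₂ ⊢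
    linarith
  nlinarith [real_inner_le_norm (v₁ - v₂) (P v₁ - P v₂), norm_nonneg (P v₁ - P v₂),
    norm_nonneg (v₁ - v₂)]

theorem sq_norm_proj_add_sub_le_inner (hVI : ∀ v, ∀ w ∈ Y, ⟪v - P v, w - P v⟫ ≤ 0) {y : E}
    (hy : y ∈ Y) (d : E) : ‖P (y + d) - y‖ ^ 2 ≤ ⟪d, P (y + d) - y⟫ := by
  have h := hVI (y + d) y hy
  rw [show y + d - P (y + d) = d - (P (y + d) - y) by abel,
    show y - P (y + d) = -(P (y + d) - y) by abel, inner_neg_right, inner_sub_left,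
    real_inner_self_eq_norm_sq] at h
  linarith

end Projection

theorem dual_scalar_bound {l ηx ηy a b c G : ℝ} (hηx : 0 < ηx) (hlηx : l * ηx ≤ 1 / 1000)
    (hηy : ηy = ηx / 256) (hc : a ^ 2 ≤ ηy * c) (hb0 : 0 ≤ b) (hb : b ≤ a + ηy * G) :
    1 / (64 * ηy) * b ^ 2 - ηx / 4 * G ^ 2 ≤ c - 5 * l * a ^ 2 - 3 * G * a := by
  subst hηy
  have hb2 : b ^ 2 ≤ 2 * a ^ 2 + 2 * (ηx / 256) ^ 2 * G ^ 2 := by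
    nlinarith [sq_nonneg (a - ηx / 256 * G)]
  have hla : l * ηx * a ^ 2 ≤ 1 / 1000 * a ^ 2 := mul_le_mul_of_nonneg_right hlηx (sq_nonneg a)
  rw [show 1 / (64 * (ηx / 256)) * b ^ 2 = 4 * b ^ 2 / ηx by field_simp; ring, div_sub' hηx.ne',
    div_le_iff₀ hηx]
  nlinarith [sq_nonneg (a - ηx / 160 * G), sq_nonneg (ηx * G)]

theorem proximal_scalar_bound {l ηx ηy β G W X E R : ℝ} (hl : 0 < l) (hηx : 0 < ηx)
    (hlηx : l * ηx ≤ 1 / 1000) (hηy : ηy = ηx / 256) (hβ : 0 < β) (hβ' : β ≤ ηy * l / 80000)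
    (hW : 0 ≤ W) (hX0 : 0 ≤ X) (hX : X ≤ W + ηx * G) (hR : R ≤ 6 * β * W + E + ηy * G) :
    2 * l * β / 16 * X ^ 2 - 96 * l * β * E ^ 2 - ηx / 16 * G ^ 2
      ≤ l * (2 * β - β ^ 2) * W ^ 2 - 4 * l * β * R * W := by
  subst hηy
  have hβ1 : β ≤ 1 / 1000000 := by nlinarith
  have hX2 : X ^ 2 ≤ 2 * W ^ 2 + 2 * ηx ^ 2 * G ^ 2 := by nlinarith [sq_nonneg (W - ηx * G)]
  have hRW : R * W ≤ (6 * β * W + E + ηx / 256 * G) * W := mul_le_mul_of_nonneg_right hR hW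
  have hlβ : 0 < l * β := mul_pos hl hβ
  nlinarith [mul_nonneg hlβ.le (sq_nonneg (48 * E - W)),
    mul_nonneg hlβ.le (sq_nonneg (W - ηx / 64 * G)), mul_le_mul_of_nonneg_left hX2 hlβ.le,
    mul_le_mul_of_nonneg_left hRW hlβ.le,
    mul_le_mul_of_nonneg_right hβ1 (mul_nonneg hlβ.le (sq_nonneg W)),
    mul_le_mul_of_nonneg_right hlηx (mul_nonneg (mul_nonneg hβ.le hηx.le) (sq_nonneg G)),
    mul_le_mul_of_nonneg_right hβ1 (mul_nonneg hηx.le (sq_nonneg G))]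

section Smooth

variable {d1 d2 : ℕ} {l p : ℝ} {f : EuclideanSpace ℝ (Fin d1) → EuclideanSpace ℝ (Fin d2) → ℝ}

local notation "E1" => EuclideanSpace ℝ (Fin d1)
local notation "E2" => EuclideanSpace ℝ (Fin d2)

theorem IsLSmooth.hasGradientAt_gradx (hf : IsLSmooth l f) (x : E1) (y : E2) :
    HasGradientAt (fun x' => f x' y) (gradx f x y) x := by
  have h := (hf.1 (x, y)).comp x
    (differentiableAt_id.prodMk (differentiableAt_const y) :
      DifferentiableAt ℝ (fun x' : E1 => (x', y)) x)
  exact h.hasGradientAt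

theorem IsLSmooth.hasGradientAt_grady (hf : IsLSmooth l f) (x : E1) (y : E2) :
    HasGradientAt (fun y' => f x y') (grady f x y) y := by
  have h := (hf.1 (x, y)).comp y
    ((differentiableAt_const x).prodMk differentiableAt_id :
      DifferentiableAt ℝ (fun y' : E2 => (x, y')) y)
  exact h.hasGradientAt

theorem IsLSmooth.norm_gradx_sub_le_fst (hf : IsLSmooth l f) (hl : 0 ≤ l) (x₁ x₂ : E1)
    (y : E2) : ‖gradx f x₁ y - gradx f x₂ y‖ ≤ l * ‖x₁ - x₂‖ := by
  have h := hf.2 x₁ x₂ y y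
  rw [sub_self, norm_zero] at h
  exact (pow_le_pow_iff_left₀ (norm_nonneg _) (by positivity) two_ne_zero).1
    (by nlinarith [sq_nonneg ‖grady f x₁ y - grady f x₂ y‖])

theorem IsLSmooth.norm_gradx_sub_le_snd (hf : IsLSmooth l f) (hl : 0 ≤ l) (x : E1)
    (y₁ y₂ : E2) : ‖gradx f x y₁ - gradx f x y₂‖ ≤ l * ‖y₁ - y₂‖ := by
  have h := hf.2 x x y₁ y₂
  rw [sub_self, norm_zero] at h
  exact (pow_le_pow_iff_left₀ (norm_nonneg _) (by positivity) two_ne_zero).1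
    (by nlinarith [sq_nonneg ‖grady f x y₁ - grady f x y₂‖])

theorem IsLSmooth.norm_grady_sub_le_fst (hf : IsLSmooth l f) (hl : 0 ≤ l) (x₁ x₂ : E1)
    (y : E2) : ‖grady f x₁ y - grady f x₂ y‖ ≤ l * ‖x₁ - x₂‖ := by
  have h := hf.2 x₁ x₂ y y
  rw [sub_self, norm_zero] at h
  exact (pow_le_pow_iff_left₀ (norm_nonneg _) (by positivity) two_ne_zero).1
    (by nlinarith [sq_nonneg ‖gradx f x₁ y - gradx f x₂ y‖])

theorem IsLSmooth.norm_grady_sub_le_snd (hf : IsLSmooth l f) (hl : 0 ≤ l) (x : E1)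
    (y₁ y₂ : E2) : ‖grady f x y₁ - grady f x y₂‖ ≤ l * ‖y₁ - y₂‖ := by
  have h := hf.2 x x y₁ y₂
  rw [sub_self, norm_zero] at h
  exact (pow_le_pow_iff_left₀ (norm_nonneg _) (by positivity) two_ne_zero).1
    (by nlinarith [sq_nonneg ‖gradx f x y₁ - gradx f x y₂‖])

theorem IsLSmooth.abs_sub_sub_inner_grady_le (hf : IsLSmooth l f) (hl : 0 ≤ l) (x : E1)
    (a b : E2) : |f x b - f x a - ⟪grady f x a, b - a⟫| ≤ l * ‖b - a‖ ^ 2 :=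
  abs_sub_sub_inner_le_of_lipschitz_gradient hl (hf.hasGradientAt_grady x)
    (hf.norm_grady_sub_le_snd hl x) a b

theorem IsLSmooth.abs_sub_sub_sub_le (hf : IsLSmooth l f) (hl : 0 ≤ l) (y₁ y₂ : E2)
    (a b : E1) : |(f b y₁ - f b y₂) - (f a y₁ - f a y₂)| ≤ l * ‖y₁ - y₂‖ * ‖b - a‖ := by
  simpa using abs_sub_sub_inner_le_of_norm_gradient_sub_le (c := 0)
    (fun x _ => (hf.hasGradientAt_gradx x y₁).sub (hf.hasGradientAt_gradx x y₂))
    (fun x _ => by simpa using hf.norm_gradx_sub_le_snd hl x y₁ y₂)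

theorem IsLSmooth.norm_proj_ascent_sub_le (hf : IsLSmooth l f) (hl : 0 ≤ l) {Y : Set E2}
    {P : E2 → E2} (hVI : ∀ v, ∀ w ∈ Y, ⟪v - P v, w - P v⟫ ≤ 0) (hPY : ∀ v, P v ∈ Y) {η : ℝ}
    (hη : 0 ≤ η) (x₁ x₂ : E1) (y : E2) :
    ‖P (y + η • grady f x₁ y) - P (y + η • grady f x₂ y)‖ ≤ η * (l * ‖x₁ - x₂‖) := by
  refine (norm_proj_sub_proj_le hVI hPY _ _).trans ?_
  rw [add_sub_add_left_eq_sub, ← smul_sub, norm_smul, Real.norm_of_nonneg hη]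
  exact mul_le_mul_of_nonneg_left (hf.norm_grady_sub_le_fst hl x₁ x₂ y) hη

theorem IsLSmooth.hasGradientAt_fhat (hf : IsLSmooth l f) (p : ℝ) (y : E2) (z x : E1) :
    HasGradientAt (fun x' => fhat f p x' y z) (gradx f x y + p • (x - z)) x := by
  have h := (hf.hasGradientAt_gradx x y).add (hasGradientAt_mul_norm_sub_sq (p / 2) z x)
  rwa [show 2 * (p / 2) = p by ring] at h

theorem IsLSmooth.norm_gradient_fhat_sub_le (hf : IsLSmooth l f) (hl : 0 ≤ l) (hp : 0 ≤ p)
    (y : E2) (z a b : E1) :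
    ‖(gradx f a y + p • (a - z)) - (gradx f b y + p • (b - z))‖ ≤ (l + p) * ‖a - b‖ := by
  rw [show (gradx f a y + p • (a - z)) - (gradx f b y + p • (b - z))
      = (gradx f a y - gradx f b y) + p • (a - b) by module]
  calc _ ≤ ‖gradx f a y - gradx f b y‖ + ‖p • (a - b)‖ := norm_add_le _ _
    _ ≤ l * ‖a - b‖ + p * ‖a - b‖ := by
      rw [norm_smul, Real.norm_of_nonneg hp]
      gcongr
      exact hf.norm_gradx_sub_le_fst hl a b y
    _ = (l + p) * ‖a - b‖ := by ring

theorem IsLSmooth.inner_gradient_fhat_sub_ge (hf : IsLSmooth l f) (hl : 0 ≤ l) (y : E2)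
    (z a b : E1) :
    (p - l) * ‖a - b‖ ^ 2
      ≤ ⟪(gradx f a y + p • (a - z)) - (gradx f b y + p • (b - z)), a - b⟫ := by
  rw [show (gradx f a y + p • (a - z)) - (gradx f b y + p • (b - z))
      = (gradx f a y - gradx f b y) + p • (a - b) by module, inner_add_left,
    real_inner_smul_left, real_inner_self_eq_norm_sq]
  have hcs := neg_le_of_abs_le (abs_real_inner_le_norm (gradx f a y - gradx f b y) (a - b))
  nlinarith [hf.norm_gradx_sub_le_fst hl a b y, norm_nonneg (a - b)]

theorem IsLSmooth.strongConvexOn_fhat (hf : IsLSmooth l f) (hl : 0 ≤ l) (p : ℝ) (y : E2)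
    (z : E1) : StrongConvexOn univ (p - l) (fun x => fhat f p x y z) :=
  strongConvexOn_univ_of_hasGradientAt (hf.hasGradientAt_fhat p y z)
    (hf.inner_gradient_fhat_sub_ge hl y z)

theorem IsLSmooth.mul_norm_sub_le_norm_gradient_fhat (hf : IsLSmooth l f) (hl : 0 ≤ l)
    {y : E2} {z u : E1} (hu : ∀ x, fhat f p u y z ≤ fhat f p x y z) (x : E1) :
    (p - l) * ‖x - u‖ ≤ ‖gradx f x y + p • (x - z)‖ := by
  have hu0 := (IsMinOn.isLocalMin (isMinOn_univ_iff.2 hu) univ_mem).hasGradientAt_eq_zero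
    (hf.hasGradientAt_fhat p y z u)
  have h := hf.inner_gradient_fhat_sub_ge (p := p) hl y z x u
  rw [hu0, sub_zero] at h
  have hcs := real_inner_le_norm (gradx f x y + p • (x - z)) (x - u)
  rcases (norm_nonneg (x - u)).eq_or_lt with h0 | h0
  · rw [← h0, mul_zero]
    exact norm_nonneg _
  · exact le_of_mul_le_mul_right (by nlinarith) h0

theorem fhat_sub_fhat_eq (f : EuclideanSpace ℝ (Fin d1) → EuclideanSpace ℝ (Fin d2) → ℝ)
    (p : ℝ) (x : E1) (y : E2) (z₁ z₂ : E1) :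
    fhat f p x y z₁ - fhat f p x y z₂ = p / 2 * (‖x - z₁‖ ^ 2 - ‖x - z₂‖ ^ 2) := by
  simp only [fhat]
  ring

theorem abs_fhat_sub_fhat_sub_le (hp : 0 ≤ p) (y₁ y₂ : E2) (z₁ z₂ a b : E1) :
    |(fhat f p a y₁ z₁ - fhat f p a y₁ z₂) - (fhat f p b y₂ z₁ - fhat f p b y₂ z₂)|
      ≤ p * ‖z₁ - z₂‖ * ‖a - b‖ := by
  rw [fhat_sub_fhat_eq, fhat_sub_fhat_eq, ← mul_sub, abs_mul, abs_of_nonneg (by positivity)]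
  nlinarith [abs_norm_sub_sq_sub_norm_sub_sq_sub_le a b z₁ z₂]

theorem max_fhat_sub_max_fhat_eq {Y : Set E2} {Φ : E1 → E1 → ℝ}
    (hΦ : ∀ x z, IsGreatest ((fun y => fhat f p x y z) '' Y) (Φ x z)) (x z₁ z₂ : E1) :
    Φ x z₁ - Φ x z₂ = p / 2 * (‖x - z₁‖ ^ 2 - ‖x - z₂‖ ^ 2) := by
  have key : ∀ w₁ w₂ : E1, Φ x w₁ - Φ x w₂ ≤ p / 2 * (‖x - w₁‖ ^ 2 - ‖x - w₂‖ ^ 2) := by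
    intro w₁ w₂
    obtain ⟨y, hy, hΦy⟩ := (hΦ x w₁).1
    have h := (hΦ x w₂).2 ⟨y, hy, rfl⟩
    have hdiff := fhat_sub_fhat_eq f p x y w₁ w₂
    simp only at hΦy h
    linarith
  linarith [key z₁ z₂, key z₂ z₁]

theorem IsLSmooth.lipschitz_argmin_fhat_y (hf : IsLSmooth l f) (hl : 0 ≤ l) {z u₁ u₂ : E1}
    {y₁ y₂ : E2} (hu₁ : ∀ x, fhat f p u₁ y₁ z ≤ fhat f p x y₁ z)
    (hu₂ : ∀ x, fhat f p u₂ y₂ z ≤ fhat f p x y₂ z) :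
    (p - l) * ‖u₁ - u₂‖ ≤ l * ‖y₁ - y₂‖ := by
  refine (hf.strongConvexOn_fhat hl p y₁ z).mul_norm_sub_le_of_isMinOn
    (hf.strongConvexOn_fhat hl p y₂ z) (isMinOn_univ_iff.2 hu₁) (isMinOn_univ_iff.2 hu₂)
    (by positivity) fun a b => ?_
  convert hf.abs_sub_sub_sub_le hl y₁ y₂ b a using 2
  simp only [fhat]
  ring

theorem IsLSmooth.lipschitz_argmin_fhat_z (hf : IsLSmooth l f) (hl : 0 ≤ l) (hp : 0 ≤ p)
    {y : E2} {z₁ z₂ u₁ u₂ : E1} (hu₁ : ∀ x, fhat f p u₁ y z₁ ≤ fhat f p x y z₁)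
    (hu₂ : ∀ x, fhat f p u₂ y z₂ ≤ fhat f p x y z₂) :
    (p - l) * ‖u₁ - u₂‖ ≤ p * ‖z₁ - z₂‖ :=
  (hf.strongConvexOn_fhat hl p y z₁).mul_norm_sub_le_of_isMinOn
    (hf.strongConvexOn_fhat hl p y z₂) (isMinOn_univ_iff.2 hu₁) (isMinOn_univ_iff.2 hu₂)
    (by positivity) (abs_fhat_sub_fhat_sub_le hp y y z₁ z₂)

theorem IsLSmooth.lipschitz_argmin_max_fhat (hf : IsLSmooth l f) (hl : 0 ≤ l) (hp : 0 ≤ p)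
    {Y : Set E2} {Φ : E1 → E1 → ℝ}
    (hΦ : ∀ x z, IsGreatest ((fun y => fhat f p x y z) '' Y) (Φ x z)) {z₁ z₂ u₁ u₂ : E1}
    (hu₁ : ∀ x, Φ u₁ z₁ ≤ Φ x z₁) (hu₂ : ∀ x, Φ u₂ z₂ ≤ Φ x z₂) :
    (p - l) * ‖u₁ - u₂‖ ≤ p * ‖z₁ - z₂‖ := by
  have hconv : ∀ z, StrongConvexOn univ (p - l) (Φ · z) := fun z =>
    strongConvexOn_of_isGreatest_image convex_univ
      (fun y _ => hf.strongConvexOn_fhat hl p y z) fun x _ => hΦ x z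
  refine (hconv z₁).mul_norm_sub_le_of_isMinOn (hconv z₂) (isMinOn_univ_iff.2 hu₁)
    (isMinOn_univ_iff.2 hu₂) (by positivity) fun a b => ?_
  rw [max_fhat_sub_max_fhat_eq hΦ, max_fhat_sub_max_fhat_eq hΦ, ← mul_sub, abs_mul,
    abs_of_nonneg (by positivity)]
  nlinarith [abs_norm_sub_sq_sub_norm_sub_sq_sub_le a b z₁ z₂]

end Smooth

section SmoothedGDA

variable {d1 d2 : ℕ} {l p : ℝ} {f : EuclideanSpace ℝ (Fin d1) → EuclideanSpace ℝ (Fin d2) → ℝ}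
  {xstar : EuclideanSpace ℝ (Fin d2) → EuclideanSpace ℝ (Fin d1) → EuclideanSpace ℝ (Fin d1)}

local notation "E1" => EuclideanSpace ℝ (Fin d1)
local notation "E2" => EuclideanSpace ℝ (Fin d2)

theorem dual_step_ge_inner (hf : IsLSmooth l f) (hl : 0 ≤ l)
    (hxstar : ∀ y z x, fhat f (2 * l) (xstar y z) y z ≤ fhat f (2 * l) x y z) {x x' z : E1}
    {y y' : E2} {G : ℝ} (hx' : l * ‖x' - x‖ ≤ G) (hx : l * ‖x - xstar y z‖ ≤ G) :
    ⟪grady f x y, y' - y⟫ - 5 * l * ‖y' - y‖ ^ 2 - 3 * G * ‖y' - y‖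
      ≤ fhat f (2 * l) x' y z - fhat f (2 * l) x' y' z
        + 2 * (fhat f (2 * l) (xstar y' z) y' z - fhat f (2 * l) (xstar y z) y z) := by
  set a := ‖y' - y‖
  set u := xstar y z
  set xt := xstar y' z
  have hT := (abs_le.1 (hf.abs_sub_sub_inner_grady_le hl x' y y')).2
  have hΨ := (abs_le.1 (hf.abs_sub_sub_inner_grady_le hl xt y y')).1
  have hmin := hxstar y z xt
  have hxt : l * ‖xt - u‖ ≤ l * a := by
    linarith [hf.lipschitz_argmin_fhat_y hl (hxstar y' z) (hxstar y z)]
  have hxtx : l * ‖xt - x‖ ≤ l * a + G := by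
    have := mul_le_mul_of_nonneg_left (norm_sub_le_norm_sub_add_norm_sub xt u x) hl
    rw [norm_sub_rev u x] at this
    linarith
  have hc₁ := (abs_le.1 ((abs_real_inner_le_norm (grady f xt y - grady f x y) (y' - y)).trans
    (mul_le_mul_of_nonneg_right ((hf.norm_grady_sub_le_fst hl xt x y).trans hxtx)
      (norm_nonneg _)))).1
  have hc₂ := (abs_le.1 ((abs_real_inner_le_norm (grady f x' y - grady f x y) (y' - y)).trans
    (mul_le_mul_of_nonneg_right ((hf.norm_grady_sub_le_fst hl x' x y).trans hx')
      (norm_nonneg _)))).2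
  rw [inner_sub_left] at hc₁ hc₂
  have e₁ : fhat f (2 * l) x' y z - fhat f (2 * l) x' y' z = f x' y - f x' y' := by
    simp only [fhat]
    ring
  have e₂ : fhat f (2 * l) xt y' z - fhat f (2 * l) xt y z = f xt y' - f xt y := by
    simp only [fhat]
    ring
  linarith

theorem dual_step_ge (hf : IsLSmooth l f) (hl : 0 ≤ l)
    (hxstar : ∀ y z x, fhat f (2 * l) (xstar y z) y z ≤ fhat f (2 * l) x y z) {Y : Set E2}
    {P : E2 → E2} (hVI : ∀ v, ∀ w ∈ Y, ⟪v - P v, w - P v⟫ ≤ 0) {ηx ηy G : ℝ}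
    (hηx : 0 < ηx) (hlηx : l * ηx ≤ 1 / 1000) (hηy : ηy = ηx / 256) {x x' z : E1}
    {y y' y₂ : E2} (hy : y ∈ Y) (hy' : y' = P (y + ηy • grady f x y))
    (hx' : l * ‖x' - x‖ ≤ G) (hx : l * ‖x - xstar y z‖ ≤ G) (hy₂ : ‖y₂ - y'‖ ≤ ηy * G) :
    1 / (64 * ηy) * ‖y₂ - y‖ ^ 2 - ηx / 4 * G ^ 2
      ≤ fhat f (2 * l) x' y z - fhat f (2 * l) x' y' z
        + 2 * (fhat f (2 * l) (xstar y' z) y' z - fhat f (2 * l) (xstar y z) y z) := by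
  have hascent := sq_norm_proj_add_sub_le_inner hVI hy (ηy • grady f x y)
  rw [← hy', real_inner_smul_left] at hascent
  exact (dual_scalar_bound hηx hlηx hηy hascent (norm_nonneg _)
    ((norm_sub_le_norm_sub_add_norm_sub y₂ y' y).trans (by linarith))).trans
    (dual_step_ge_inner hf hl hxstar hx' hx)

theorem proximal_step_ge_neg_norm (hp : 0 ≤ p)
    (hxstar : ∀ y z x, fhat f p (xstar y z) y z ≤ fhat f p x y z) {Y : Set E2}
    {P : E1 → ℝ} {yhat : E1 → E2} (hyhatY : ∀ z, yhat z ∈ Y)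
    (hPub : ∀ z, ∀ y ∈ Y, fhat f p (xstar y z) y z ≤ P z)
    (hyhat : ∀ z, fhat f p (xstar (yhat z) z) (yhat z) z = P z) (y : E2) (z z' : E1) :
    -(p * ‖z' - z‖ * ‖xstar y z' - xstar (yhat z') z‖)
      ≤ (fhat f p (xstar y z') y z' - fhat f p (xstar y z) y z) + (P z - P z') := by
  -- `x*(y, z')` is a competitor for `Ψ(y, z)`, and `x*(ŷ*(z'), z)` one for `Ψ(ŷ*(z'), z')`
  have h₁ := hxstar y z (xstar y z')
  have h₂ := hPub z _ (hyhatY z')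
  have h₃ := hyhat z' ▸ hxstar (yhat z') z' (xstar (yhat z') z)
  have h₄ := neg_le_of_abs_le (abs_fhat_sub_fhat_sub_le (f := f) hp y (yhat z') z' z
    (xstar y z') (xstar (yhat z') z))
  linarith

theorem norm_argmin_sub_argmin_le (hf : IsLSmooth l f) (hl : 0 < l)
    (hxstar : ∀ y z x, fhat f (2 * l) (xstar y z) y z ≤ fhat f (2 * l) x y z) {Y : Set E2}
    {Φ : E1 → E1 → ℝ} (hΦ : ∀ x z, IsGreatest ((fun y => fhat f (2 * l) x y z) '' Y) (Φ x z))
    {xstarz : E1 → E1} (hxstarz : ∀ z x, Φ (xstarz z) z ≤ Φ x z) {yhat : E1 → E2}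
    (hxyhat : ∀ z, xstar (yhat z) z = xstarz z) (y₁ y₂ : E2) (z z' : E1) :
    ‖xstar y₁ z' - xstar (yhat z') z‖
      ≤ 6 * ‖z' - z‖ + ‖xstarz z - xstar y₂ z‖ + ‖y₂ - y₁‖ := by
  have cancel : ∀ {A B : ℝ}, (2 * l - l) * A ≤ l * B → A ≤ B := fun h =>
    le_of_mul_le_mul_left (by linarith) hl
  have h₁ := cancel <| (hf.lipschitz_argmin_fhat_z hl.le (by positivity) (hxstar y₁ z')
    (hxstar y₁ z)).trans_eq (by ring : 2 * l * ‖z' - z‖ = l * (2 * ‖z' - z‖))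
  have h₂ := cancel <| hf.lipschitz_argmin_fhat_y hl.le (hxstar y₁ z) (hxstar y₂ z)
  have h₃ := cancel <| (hf.lipschitz_argmin_max_fhat hl.le (by positivity) hΦ (hxstarz z)
    (hxstarz z')).trans_eq (by ring : 2 * l * ‖z - z'‖ = l * (2 * ‖z - z'‖))
  have h₄ := cancel <| (hf.lipschitz_argmin_fhat_z hl.le (by positivity)
    (hxstar (yhat z') z') (hxstar (yhat z') z)).trans_eq
    (by ring : 2 * l * ‖z' - z‖ = l * (2 * ‖z' - z‖))
  rw [hxyhat] at h₄
  rw [norm_sub_rev z z'] at h₃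
  rw [norm_sub_rev y₂ y₁, norm_sub_rev (xstarz z)]
  have t₁ := norm_sub_le_norm_sub_add_norm_sub (xstar y₁ z') (xstar y₁ z) (xstar (yhat z') z)
  have t₂ := norm_sub_le_norm_sub_add_norm_sub (xstar y₁ z) (xstar y₂ z) (xstar (yhat z') z)
  have t₃ := norm_sub_le_norm_sub_add_norm_sub (xstar y₂ z) (xstarz z) (xstar (yhat z') z)
  have t₄ := norm_sub_le_norm_sub_add_norm_sub (xstarz z) (xstarz z') (xstar (yhat z') z)
  linarith

theorem proximal_step_ge (hf : IsLSmooth l f) (hl : 0 < l)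
    (hxstar : ∀ y z x, fhat f (2 * l) (xstar y z) y z ≤ fhat f (2 * l) x y z) {Y : Set E2}
    {Φ : E1 → E1 → ℝ} (hΦ : ∀ x z, IsGreatest ((fun y => fhat f (2 * l) x y z) '' Y) (Φ x z))
    {xstarz : E1 → E1} (hxstarz : ∀ z x, Φ (xstarz z) z ≤ Φ x z) {P : E1 → ℝ}
    {yhat : E1 → E2} (hyhatY : ∀ z, yhat z ∈ Y)
    (hPub : ∀ z, ∀ y ∈ Y, fhat f (2 * l) (xstar y z) y z ≤ P z)
    (hyhat : ∀ z, fhat f (2 * l) (xstar (yhat z) z) (yhat z) z = P z)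
    (hxyhat : ∀ z, xstar (yhat z) z = xstarz z) {ηx ηy β G : ℝ} (hηx : 0 < ηx)
    (hlηx : l * ηx ≤ 1 / 1000) (hηy : ηy = ηx / 256) (hβ : 0 < β) (hβ' : β ≤ ηy * l / 80000)
    {x x' z z' : E1} {y' y₂ : E2} (hz' : z' = z + β • (x' - z))
    (hx : ‖x - z‖ ≤ ‖x' - z‖ + ηx * G) (hy₂ : ‖y₂ - y'‖ ≤ ηy * G) :
    2 * l * β / 16 * ‖x - z‖ ^ 2 - 96 * l * β * ‖xstarz z - xstar y₂ z‖ ^ 2 - ηx / 16 * G ^ 2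
      ≤ (fhat f (2 * l) x' y' z - fhat f (2 * l) x' y' z')
        + 2 * (fhat f (2 * l) (xstar y' z') y' z' - fhat f (2 * l) (xstar y' z) y' z)
        + 2 * (P z - P z') := by
  have hz'z : ‖z' - z‖ = β * ‖x' - z‖ := by
    rw [hz', add_sub_cancel_left, norm_smul, Real.norm_of_nonneg hβ.le]
  have henv := proximal_step_ge_neg_norm (by positivity) hxstar hyhatY hPub hyhat y' z z'
  have hchain := norm_argmin_sub_argmin_le hf hl hxstar hΦ hxstarz hxyhat y' y₂ z z'
  rw [hz'z] at henv hchain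
  have hscalar := proximal_scalar_bound (E := ‖xstarz z - xstar y₂ z‖) hl hηx hlηx hηy hβ hβ'
    (norm_nonneg _) (norm_nonneg _) hx (hchain.trans (by linarith))
  have hshift := fhat_sub_fhat_eq f (2 * l) x' y' z z'
  rw [show x' - z' = (1 - β) • (x' - z) by rw [hz']; module, norm_smul, mul_pow,
    Real.norm_eq_abs, sq_abs] at hshift
  linarith

end SmoothedGDA

theorem statement14_general {d1 d2 : ℕ} (l ηx ηy β : ℝ) (hl : 0 < l)
    (hηx : 0 < ηx) (hηx' : ηx ≤ 1 / (1000 * l)) (hηy : ηy = ηx / 256)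
    (hβ : 0 < β) (hβ' : β ≤ ηy * l / 80000)
    (f : EuclideanSpace ℝ (Fin d1) → EuclideanSpace ℝ (Fin d2) → ℝ)
    (hf : IsLSmooth l f)
    -- `Y` nonempty convex compact; `projY` the nearest-point projection onto `Y`
    (Y : Set (EuclideanSpace ℝ (Fin d2))) (hYconv : Convex ℝ Y)
    (projY : EuclideanSpace ℝ (Fin d2) → EuclideanSpace ℝ (Fin d2))
    (hprojY_mem : ∀ v, projY v ∈ Y)
    (hprojY : ∀ v, ∀ w ∈ Y, ‖v - projY v‖ ≤ ‖v - w‖)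
    -- `x*(y, z)`: minimizer of `x ↦ f̂(x, y, z)` with `p = 2l`; `Ψ(y,z) = f̂(x*(y,z),y,z)`
    (xstar : EuclideanSpace ℝ (Fin d2) → EuclideanSpace ℝ (Fin d1) → EuclideanSpace ℝ (Fin d1))
    (hxstar : ∀ y z x, fhat f (2 * l) (xstar y z) y z ≤ fhat f (2 * l) x y z)
    -- `Φ(x,z) = max_{y∈Y} f̂(x,y,z)` (attained), with minimizer `x*(z)` in `x`
    (Φ : EuclideanSpace ℝ (Fin d1) → EuclideanSpace ℝ (Fin d1) → ℝ)
    (hΦ : ∀ x z, IsGreatest ((fun y => fhat f (2 * l) x y z) '' Y) (Φ x z))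
    (xstarz : EuclideanSpace ℝ (Fin d1) → EuclideanSpace ℝ (Fin d1))
    (hxstarz : ∀ z x, Φ (xstarz z) z ≤ Φ x z)
    -- minimax regularity: `P(z) = sup_{y∈Y} Ψ(y,z)` attained at `ŷ*(z) ∈ Y`,
    -- `P(z) = min_x Φ(x,z)` and `x*(ŷ*(z),z) = x*(z)`
    (P : EuclideanSpace ℝ (Fin d1) → ℝ)
    (yhat : EuclideanSpace ℝ (Fin d1) → EuclideanSpace ℝ (Fin d2))
    (hyhatY : ∀ z, yhat z ∈ Y)
    (hPub : ∀ z, ∀ y ∈ Y, fhat f (2 * l) (xstar y z) y z ≤ P z)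
    (hyhat : ∀ z, fhat f (2 * l) (xstar (yhat z) z) (yhat z) z = P z)
    (hxyhat : ∀ z, xstar (yhat z) z = xstarz z)
    -- one step of Smoothed-GDA
    (x z : EuclideanSpace ℝ (Fin d1)) (y : EuclideanSpace ℝ (Fin d2)) (hy : y ∈ Y)
    (x' z' : EuclideanSpace ℝ (Fin d1)) (y' : EuclideanSpace ℝ (Fin d2))
    (hx' : x' = x - ηx • (gradx f x y + (2 * l) • (x - z)))
    (hy' : y' = projY (y + ηy • grady f x y))
    (hz' : z' = z + β • (x' - z)) :
    (fhat f (2 * l) x y z - 2 * fhat f (2 * l) (xstar y z) y z + 2 * P z)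
        - (fhat f (2 * l) x' y' z' - 2 * fhat f (2 * l) (xstar y' z') y' z' + 2 * P z')
      ≥ ηx / 64 * ‖gradx f x y + (2 * l) • (x - z)‖ ^ 2
        + 1 / (64 * ηy) * ‖projY (y + ηy • grady f (xstar y z) y) - y‖ ^ 2
        + (2 * l) * β / 16 * ‖x - z‖ ^ 2
        - 48 * (2 * l) * β
            * ‖xstarz z - xstar (projY (y + ηy • grady f (xstar y z) y)) z‖ ^ 2 := by
  have hVI := inner_sub_proj_sub_proj_nonpos hYconv hprojY_mem hprojY
  have hlηx : l * ηx ≤ 1 / 1000 := by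
    rw [le_div_iff₀ (by positivity)] at hηx'
    linarith
  have hηy0 : 0 ≤ ηy := by
    rw [hηy]
    positivity
  set G := ‖gradx f x y + (2 * l) • (x - z)‖ with hG
  have hxu : l * ‖x - xstar y z‖ ≤ G := by
    linarith [hf.mul_norm_sub_le_norm_gradient_fhat hl.le (hxstar y z) x]
  have hx'x : ‖x' - x‖ = ηx * G := by
    rw [hx', sub_sub_cancel_left, norm_neg, norm_smul, Real.norm_of_nonneg hηx.le]
  have hxz : ‖x - z‖ ≤ ‖x' - z‖ + ηx * G := by
    have := norm_sub_le_norm_sub_add_norm_sub x x' z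
    rwa [norm_sub_rev x x', hx'x, add_comm] at this
  have hy₂ : ‖projY (y + ηy • grady f (xstar y z) y) - y'‖ ≤ ηy * G := by
    rw [hy']
    refine (hf.norm_proj_ascent_sub_le hl.le hVI hprojY_mem hηy0 _ x y).trans ?_
    exact mul_le_mul_of_nonneg_left (by rwa [norm_sub_rev]) hηy0
  have hdescent := sub_gradient_step_ge (by positivity : 0 ≤ l + 2 * l)
    (hf.hasGradientAt_fhat (2 * l) y z) (hf.norm_gradient_fhat_sub_le hl.le (by positivity) y z)
    x ηx
  rw [← hx', ← hG] at hdescent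
  have hdual := dual_step_ge hf hl.le hxstar hVI hηx hlηx hηy hy hy'
    (by rw [hx'x]; nlinarith [norm_nonneg (gradx f x y + (2 * l) • (x - z))]) hxu hy₂
  have hprox := proximal_step_ge hf hl hxstar hΦ hxstarz hyhatY hPub hyhat hxyhat hηx hlηx hηy hβ
    hβ' hz' hxz hy₂
  nlinarith [mul_le_mul_of_nonneg_right hlηx (by positivity : 0 ≤ ηx * G ^ 2)]

/-- potential decrease, constrained case: with `p = 2l`,
`0 < η_x ≤ 1/(1000l)`, `η_y = η_x/256`, `0 < β ≤ η_y l/80000`, one projected step of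
Smoothed-GDA decreases the potential `V = f̂ − 2Ψ + 2P` by at least
`(η_x/64)‖∇_x f̂(x,y,z)‖² + (1/(64η_y))‖y⁺(z) − y‖² + (pβ/16)‖x−z‖²
  − 48pβ‖x*(z) − x*(y⁺(z),z)‖²`, where `y⁺(z) = P_Y(y + η_y ∇_y f(x*(y,z), y))`. -/
theorem statement14 {d1 d2 : ℕ} (l ηx ηy β : ℝ) (hl : 0 < l)
    (hηx : 0 < ηx) (hηx' : ηx ≤ 1 / (1000 * l)) (hηy : ηy = ηx / 256)
    (hβ : 0 < β) (hβ' : β ≤ ηy * l / 80000)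
    (f : EuclideanSpace ℝ (Fin d1) → EuclideanSpace ℝ (Fin d2) → ℝ)
    (hf : IsLSmooth l f)
    -- `Y` nonempty convex compact; `projY` the nearest-point projection onto `Y`
    (Y : Set (EuclideanSpace ℝ (Fin d2))) (hYne : Y.Nonempty) (hYconv : Convex ℝ Y)
    (hYcomp : IsCompact Y)
    (projY : EuclideanSpace ℝ (Fin d2) → EuclideanSpace ℝ (Fin d2))
    (hprojY_mem : ∀ v, projY v ∈ Y)
    (hprojY : ∀ v, ∀ w ∈ Y, ‖v - projY v‖ ≤ ‖v - w‖)
    -- `x*(y, z)`: minimizer of `x ↦ f̂(x, y, z)` with `p = 2l`; `Ψ(y,z) = f̂(x*(y,z),y,z)`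
    (xstar : EuclideanSpace ℝ (Fin d2) → EuclideanSpace ℝ (Fin d1) → EuclideanSpace ℝ (Fin d1))
    (hxstar : ∀ y z x, fhat f (2 * l) (xstar y z) y z ≤ fhat f (2 * l) x y z)
    -- `Φ(x,z) = max_{y∈Y} f̂(x,y,z)` (attained), with minimizer `x*(z)` in `x`
    (Φ : EuclideanSpace ℝ (Fin d1) → EuclideanSpace ℝ (Fin d1) → ℝ)
    (hΦ : ∀ x z, IsGreatest ((fun y => fhat f (2 * l) x y z) '' Y) (Φ x z))
    (xstarz : EuclideanSpace ℝ (Fin d1) → EuclideanSpace ℝ (Fin d1))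
    (hxstarz : ∀ z x, Φ (xstarz z) z ≤ Φ x z)
    -- minimax regularity: `P(z) = sup_{y∈Y} Ψ(y,z)` attained at `ŷ*(z) ∈ Y`,
    -- `P(z) = min_x Φ(x,z)` and `x*(ŷ*(z),z) = x*(z)`
    (P : EuclideanSpace ℝ (Fin d1) → ℝ)
    (yhat : EuclideanSpace ℝ (Fin d1) → EuclideanSpace ℝ (Fin d2))
    (hyhatY : ∀ z, yhat z ∈ Y)
    (hPub : ∀ z, ∀ y ∈ Y, fhat f (2 * l) (xstar y z) y z ≤ P z)
    (hyhat : ∀ z, fhat f (2 * l) (xstar (yhat z) z) (yhat z) z = P z)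
    (hminimax : ∀ z, P z = Φ (xstarz z) z)
    (hxyhat : ∀ z, xstar (yhat z) z = xstarz z)
    -- one step of Smoothed-GDA
    (x z : EuclideanSpace ℝ (Fin d1)) (y : EuclideanSpace ℝ (Fin d2)) (hy : y ∈ Y)
    (x' z' : EuclideanSpace ℝ (Fin d1)) (y' : EuclideanSpace ℝ (Fin d2))
    (hx' : x' = x - ηx • (gradx f x y + (2 * l) • (x - z)))
    (hy' : y' = projY (y + ηy • grady f x y))
    (hz' : z' = z + β • (x' - z)) :
    (fhat f (2 * l) x y z - 2 * fhat f (2 * l) (xstar y z) y z + 2 * P z)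
        - (fhat f (2 * l) x' y' z' - 2 * fhat f (2 * l) (xstar y' z') y' z' + 2 * P z')
      ≥ ηx / 64 * ‖gradx f x y + (2 * l) • (x - z)‖ ^ 2
        + 1 / (64 * ηy) * ‖projY (y + ηy • grady f (xstar y z) y) - y‖ ^ 2
        + (2 * l) * β / 16 * ‖x - z‖ ^ 2
        - 48 * (2 * l) * β
            * ‖xstarz z - xstar (projY (y + ηy • grady f (xstar y z) y)) z‖ ^ 2 :=
  statement14_general l ηx ηy β hl hηx hηx' hηy hβ hβ' f hf Y hYconv projY hprojY_mem hprojY xstar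
    hxstar Φ hΦ xstarz hxstarz P yhat hyhatY hPub hyhat hxyhat x z y hy x' z' y' hx' hy' hz'
end

section
/- Let f satisfy the two-sided PL condition with constants μ₁, μ₂ ∈ (0, l], let Φ(x) := max_{y} f(x,y), assume Φ* := inf_{x} Φ(x) > −∞, and define W(x,y) := 2Φ(x) − f(x,y) − Φ*. Let 0 < η_y ≤ 1/(4l) and η_x = η_y·μ₂²/(64l²). Then one step of gradient descent ascent, x' := x − η_x∇_x f(x,y), y' := y + η_y∇_y f(x,y), satisfies W(x',y') ≤ (1 − η_x·μ₁/16)·W(x,y). Consequently the GDA iterates (x_t,y_t) defined by x_{t+1} = x_t − η_x∇_x f(x_t,y_t), y_{t+1} = y_t + η_y∇_y f(x_t,y_t) satisfy W(x_t,y_t) ≤ (1 − η_x·μ₁/16)^t·W(x₀,y₀) for all t ≥ 0. -/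
open Set Metric
open scoped RealInnerProductSpace

/-!
Track `x` through `Φ(x) = max_y f(x, y)`. Gradient ascent on `f(x, ·)` with step `1/(4l)` makes
`√(Φ(x) - f(x, y))` drop by a fixed multiple of each step's length (PL inequality in `y`), so the
ascent path has finite length and ends at a maximizer within `O(√((Φ(x) - f(x, y))/μ₂))` of `y`:
quadratic growth. Hence a maximizer of `f(x + u, ·)` lies within `O(l‖u‖/μ₂)` of one of `f(x, ·)`,
which gives a descent lemma for `Φ` along `-∇_x f(x, y)`. Together with the descent–ascent
inequality for `f` itself, the two PL inequalities make one GDA step remove a fixed fraction of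
`W = 2Φ - f - Φ*`.
-/

open scoped Gradient Topology

theorem mul_le_two_mul_sub_of_mul_sq_le_sq_sub_sq {c G s t : ℝ} (hc : 0 < c) (ht : 0 ≤ t)
    (hts : t ≤ s) (hsG : s ≤ G) (h : c * G ^ 2 ≤ s ^ 2 - t ^ 2) : c * G ≤ 2 * (s - t) := by
  rcases hts.eq_or_lt with rfl | hlt
  · nlinarith
  · nlinarith

theorem exists_tendsto_dist_le_of_dist_le_sub {X : Type*} [PseudoMetricSpace X] [CompleteSpace X]
    {Y : ℕ → X} {s : ℕ → ℝ} (hs : ∀ n, 0 ≤ s n)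
    (h : ∀ n, dist (Y n) (Y (n + 1)) ≤ s n - s (n + 1)) :
    ∃ z, Filter.Tendsto Y Filter.atTop (𝓝 z) ∧ dist (Y 0) z ≤ s 0 := by
  have hpartial : ∀ n, ∑ i ∈ Finset.range n, (s i - s (i + 1)) ≤ s 0 := fun n => by
    rw [Finset.sum_range_sub']; linarith [hs n]
  obtain ⟨z, hz⟩ := cauchySeq_tendsto_of_complete <| cauchySeq_of_dist_le_of_summable _ h <|
    summable_of_sum_range_le (fun n => dist_nonneg.trans (h n)) hpartial
  refine ⟨z, hz, le_of_tendsto (tendsto_const_nhds.dist hz) (Filter.Eventually.of_forall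
    fun n => (dist_le_range_sum_of_dist_le n fun {k} _ => h k).trans (hpartial n))⟩

section InnerProductSpace

variable {H : Type*} [NormedAddCommGroup H] [InnerProductSpace ℝ H] [CompleteSpace H]
  {g : H → ℝ} {l : ℝ}

theorem abs_sub_sub_inner_gradient_le (hg : Differentiable ℝ g)
    (hlip : ∀ a b, ‖∇ g a - ∇ g b‖ ≤ l * ‖a - b‖) (x u : H) :
    |g (x + u) - g x - ⟪∇ g x, u⟫| ≤ l / 2 * ‖u‖ ^ 2 := by
  have hline : ∀ t : ℝ, HasDerivAt (fun t : ℝ => g (x + t • u)) ⟪∇ g (x + t • u), u⟫ t := by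
    intro t
    have h := (hg _).hasGradientAt.hasFDerivAt.comp_hasDerivAt t
      (((hasDerivAt_id t).smul_const u).const_add x)
    rwa [InnerProductSpace.toDual_apply_apply, id, one_smul] at h
  have hφ : ∀ t : ℝ, HasDerivAt (fun t => g (x + t • u) - g x - t * ⟪∇ g x, u⟫)
      (⟪∇ g (x + t • u), u⟫ - ⟪∇ g x, u⟫) t := fun t => by
    simpa only [id, one_mul] using
      ((hline t).sub_const (g x)).fun_sub ((hasDerivAt_id t).mul_const ⟪∇ g x, u⟫)
  have hB : ∀ t : ℝ, HasDerivAt (fun t => l / 2 * ‖u‖ ^ 2 * t ^ 2) (l * ‖u‖ ^ 2 * t) t :=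
    fun t => ((hasDerivAt_pow 2 t).const_mul (l / 2 * ‖u‖ ^ 2)).congr_deriv (by push_cast; ring)
  have hbound : ∀ t ∈ Ico (0 : ℝ) 1,
      ‖⟪∇ g (x + t • u), u⟫ - ⟪∇ g x, u⟫‖ ≤ l * ‖u‖ ^ 2 * t := by
    intro t ht
    calc ‖⟪∇ g (x + t • u), u⟫ - ⟪∇ g x, u⟫‖ = |⟪∇ g (x + t • u) - ∇ g x, u⟫| := by
          rw [inner_sub_left, Real.norm_eq_abs]
      _ ≤ ‖∇ g (x + t • u) - ∇ g x‖ * ‖u‖ := abs_real_inner_le_norm _ _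
      _ ≤ l * ‖t • u‖ * ‖u‖ := by gcongr; simpa using hlip (x + t • u) x
      _ = l * ‖u‖ ^ 2 * t := by rw [norm_smul, Real.norm_of_nonneg ht.1]; ring
  simpa using image_norm_le_of_norm_deriv_right_le_deriv_boundary
    (fun t _ => (hφ t).continuousAt.continuousWithinAt) (fun t _ => (hφ t).hasDerivWithinAt)
    (by simp) hB hbound (right_mem_Icc.2 zero_le_one)

theorem le_apply_add_smul_gradient (hg : Differentiable ℝ g)
    (hlip : ∀ a b, ‖∇ g a - ∇ g b‖ ≤ l * ‖a - b‖) (z : H) (γ : ℝ) :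
    g z + γ * (1 - l * γ / 2) * ‖∇ g z‖ ^ 2 ≤ g (z + γ • ∇ g z) := by
  have h := (abs_le.1 (abs_sub_sub_inner_gradient_le hg hlip z (γ • ∇ g z))).1
  rw [real_inner_smul_right, real_inner_self_eq_norm_sq, norm_smul, Real.norm_eq_abs,
    mul_pow, sq_abs] at h
  linarith

variable {μ M : ℝ}

theorem norm_smul_gradient_le_sqrt_sub_sqrt (hμ : 0 < μ) (hg : Differentiable ℝ g)
    (hlip : ∀ a b, ‖∇ g a - ∇ g b‖ ≤ l * ‖a - b‖) (hM : ∀ y, g y ≤ M)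
    (hPL : ∀ y, 2 * μ * (M - g y) ≤ ‖∇ g y‖ ^ 2) {γ : ℝ} (hγ : 0 < γ) (hlγ : l * γ = 1 / 4)
    (z : H) :
    ‖γ • ∇ g z‖
      ≤ 8 / (7 * μ) * (√(2 * μ * (M - g z)) - √(2 * μ * (M - g (z + γ • ∇ g z)))) := by
  have hgain : g z + 7 / 8 * γ * ‖∇ g z‖ ^ 2 ≤ g (z + γ • ∇ g z) := by
    have h := le_apply_add_smul_gradient hg hlip z γ
    rw [hlγ] at h
    linarith
  have hgap : ∀ y, 0 ≤ 2 * μ * (M - g y) := fun y =>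
    mul_nonneg (by positivity) (sub_nonneg.2 (hM y))
  have key : 2 * μ * (7 / 8 * γ) * ‖∇ g z‖
      ≤ 2 * (√(2 * μ * (M - g z)) - √(2 * μ * (M - g (z + γ • ∇ g z)))) := by
    apply mul_le_two_mul_sub_of_mul_sq_le_sq_sub_sq (by positivity) (Real.sqrt_nonneg _)
    · exact Real.sqrt_le_sqrt (by nlinarith [mul_nonneg hγ.le (sq_nonneg ‖∇ g z‖)])
    · exact (Real.sqrt_le_sqrt (hPL z)).trans_eq (Real.sqrt_sq (norm_nonneg _))
    · rw [Real.sq_sqrt (hgap _), Real.sq_sqrt (hgap _)]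
      nlinarith
  rw [norm_smul, Real.norm_of_nonneg hγ.le, div_mul_eq_mul_div, le_div_iff₀ (by positivity)]
  linarith

-- Ascent with step `1/(4l)` gives the constant `128/49 ≤ 3` (the gradient flow would give `2`).
theorem exists_eq_and_mul_norm_sub_sq_le_of_pl (hl : 0 < l) (hμ : 0 < μ)
    (hg : Differentiable ℝ g) (hlip : ∀ a b, ‖∇ g a - ∇ g b‖ ≤ l * ‖a - b‖)
    (hM : ∀ y, g y ≤ M) (hPL : ∀ y, 2 * μ * (M - g y) ≤ ‖∇ g y‖ ^ 2) (y : H) :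
    ∃ z, g z = M ∧ μ * ‖y - z‖ ^ 2 ≤ 3 * (M - g y) := by
  obtain ⟨γ, hγ, hlγ⟩ : ∃ γ : ℝ, 0 < γ ∧ l * γ = 1 / 4 :=
    ⟨1 / (4 * l), by positivity, by field_simp⟩
  set T : H → H := fun z => z + γ • ∇ g z
  set Y : ℕ → H := fun n => T^[n] y
  have hY : ∀ n, Y (n + 1) = T (Y n) := fun n => Function.iterate_succ_apply' T n y
  set s : ℕ → ℝ := fun n => 8 / (7 * μ) * √(2 * μ * (M - g (Y n)))
  have hstep : ∀ n, dist (Y n) (Y (n + 1)) ≤ s n - s (n + 1) := fun n => by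
    rw [dist_comm, hY, dist_eq_norm, add_sub_cancel_left, ← mul_sub, hY]
    exact norm_smul_gradient_le_sqrt_sub_sqrt hμ hg hlip hM hPL hγ hlγ (Y n)
  obtain ⟨z, hYz, hdist⟩ := exists_tendsto_dist_le_of_dist_le_sub (fun n => by positivity) hstep
  have hTz : T z = z := by
    have : Continuous (∇ g) := (LipschitzWith.of_dist_le_mul (K := l.toNNReal) fun a b => by
      rw [Real.coe_toNNReal l hl.le, dist_eq_norm, dist_eq_norm]; exact hlip a b).continuous
    refine tendsto_nhds_unique (((by fun_prop : Continuous T).tendsto z).comp hYz) ?_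
    simpa [Function.comp_def, hY] using (Filter.tendsto_add_atTop_iff_nat 1).2 hYz
  have hPLz := hPL z
  rw [show ∇ g z = 0 by simpa [T, hγ.ne'] using hTz, norm_zero] at hPLz
  refine ⟨z, le_antisymm (hM z) (by nlinarith), ?_⟩
  have hsq : ‖y - z‖ ^ 2 ≤ (8 / (7 * μ)) ^ 2 * (2 * μ * (M - g y)) := by
    simpa [mul_pow, dist_eq_norm, Y, s, Real.sq_sqrt, mul_nonneg, hμ.le, hM y] using
      pow_le_pow_left₀ dist_nonneg hdist 2
  have hconst : μ * ((8 / (7 * μ)) ^ 2 * (2 * μ * (M - g y))) = 128 / 49 * (M - g y) := by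
    field_simp; ring
  nlinarith [hM y]

end InnerProductSpace

noncomputable def lyapunov {d1 d2 : ℕ}
    (f : EuclideanSpace ℝ (Fin d1) → EuclideanSpace ℝ (Fin d2) → ℝ)
    (ymax : EuclideanSpace ℝ (Fin d1) → EuclideanSpace ℝ (Fin d2)) (Φstar : ℝ)
    (x : EuclideanSpace ℝ (Fin d1)) (y : EuclideanSpace ℝ (Fin d2)) : ℝ :=
  2 * f x (ymax x) - f x y - Φstar

namespace IsLSmooth

variable {d1 d2 : ℕ} {l : ℝ} {f : EuclideanSpace ℝ (Fin d1) → EuclideanSpace ℝ (Fin d2) → ℝ}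

local notation "E" => EuclideanSpace ℝ (Fin d1)
local notation "F" => EuclideanSpace ℝ (Fin d2)

theorem differentiable_left (hf : IsLSmooth l f) (y : F) : Differentiable ℝ (fun x => f x y) :=
  hf.1.comp (differentiable_id.prodMk (differentiable_const y))

theorem differentiable_right (hf : IsLSmooth l f) (x : E) : Differentiable ℝ (fun y => f x y) :=
  hf.1.comp ((differentiable_const x).prodMk differentiable_id)

theorem norm_gradx_sub_le (hf : IsLSmooth l f) (hl : 0 ≤ l) (x₁ x₂ : E) (y₁ y₂ : F) :
    ‖gradx f x₁ y₁ - gradx f x₂ y₂‖ ≤ l * (‖x₁ - x₂‖ + ‖y₁ - y₂‖) := by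
  refine le_of_pow_le_pow_left₀ two_ne_zero (by positivity) ?_
  nlinarith [hf.2 x₁ x₂ y₁ y₂, sq_nonneg ‖grady f x₁ y₁ - grady f x₂ y₂‖,
    mul_nonneg (mul_nonneg (sq_nonneg l) (norm_nonneg (x₁ - x₂))) (norm_nonneg (y₁ - y₂))]

theorem norm_grady_sub_le (hf : IsLSmooth l f) (hl : 0 ≤ l) (x₁ x₂ : E) (y₁ y₂ : F) :
    ‖grady f x₁ y₁ - grady f x₂ y₂‖ ≤ l * (‖x₁ - x₂‖ + ‖y₁ - y₂‖) := by
  refine le_of_pow_le_pow_left₀ two_ne_zero (by positivity) ?_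
  nlinarith [hf.2 x₁ x₂ y₁ y₂, sq_nonneg ‖gradx f x₁ y₁ - gradx f x₂ y₂‖,
    mul_nonneg (mul_nonneg (sq_nonneg l) (norm_nonneg (x₁ - x₂))) (norm_nonneg (y₁ - y₂))]

theorem abs_sub_sub_inner_gradx_le (hf : IsLSmooth l f) (hl : 0 ≤ l) (x u : E) (y : F) :
    |f (x + u) y - f x y - ⟪gradx f x y, u⟫| ≤ l / 2 * ‖u‖ ^ 2 :=
  abs_sub_sub_inner_gradient_le (hf.differentiable_left y)
    (fun a b => by simpa [gradx] using hf.norm_gradx_sub_le hl a b y y) x u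

theorem abs_sub_sub_inner_grady_le_s19 (hf : IsLSmooth l f) (hl : 0 ≤ l) (x : E) (y v : F) :
    |f x (y + v) - f x y - ⟪grady f x y, v⟫| ≤ l / 2 * ‖v‖ ^ 2 :=
  abs_sub_sub_inner_gradient_le (hf.differentiable_right x)
    (fun a b => by simpa [grady] using hf.norm_grady_sub_le hl x x a b) y v

theorem le_apply_add_add (hf : IsLSmooth l f) (hl : 0 ≤ l) (x u : E) (y v : F) :
    f x y + ⟪gradx f x y, u⟫ + ⟪grady f x y, v⟫ - l * (‖u‖ ^ 2 + ‖v‖ ^ 2) ≤ f (x + u) (y + v) := by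
  have hx := (abs_le.1 (hf.abs_sub_sub_inner_gradx_le hl x u (y + v))).1
  have hy := (abs_le.1 (hf.abs_sub_sub_inner_grady_le_s19 hl x y v)).1
  have hcross : ⟪gradx f x y, u⟫ - l * ‖v‖ * ‖u‖ ≤ ⟪gradx f x (y + v), u⟫ := by
    have h := (abs_le.1 ((abs_real_inner_le_norm (gradx f x (y + v) - gradx f x y) u).trans
      (mul_le_mul_of_nonneg_right (hf.norm_gradx_sub_le hl x x (y + v) y) (norm_nonneg u)))).1
    rw [inner_sub_left] at h
    simp only [sub_self, norm_zero, zero_add, add_sub_cancel_left] at h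
    linarith
  nlinarith [sq_nonneg (‖u‖ - ‖v‖), mul_nonneg hl (sq_nonneg (‖u‖ - ‖v‖))]

theorem exists_eq_and_mul_norm_sub_sq_le (hf : IsLSmooth l f) (hl : 0 < l) {μ : ℝ} (hμ : 0 < μ)
    {ymax : E → F} (hymax : ∀ x y, f x y ≤ f x (ymax x))
    (hPL : ∀ x y, 2 * μ * (f x (ymax x) - f x y) ≤ ‖grady f x y‖ ^ 2) (x : E) (y : F) :
    ∃ yh, f x yh = f x (ymax x) ∧ μ * ‖y - yh‖ ^ 2 ≤ 3 * (f x (ymax x) - f x y) :=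
  exists_eq_and_mul_norm_sub_sq_le_of_pl hl hμ (hf.differentiable_right x)
    (fun a b => by simpa [grady] using hf.norm_grady_sub_le hl.le x x a b) (hymax x) (hPL x) y

theorem apply_ymax_add_le (hf : IsLSmooth l f) (hl : 0 < l) {μ : ℝ} (hμ : 0 < μ) (hμl : μ ≤ l)
    {ymax : E → F} (hymax : ∀ x y, f x y ≤ f x (ymax x))
    (hPL : ∀ x y, 2 * μ * (f x (ymax x) - f x y) ≤ ‖grady f x y‖ ^ 2)
    {x : E} {yh : F} (hyh : f x yh = f x (ymax x)) (u : E) :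
    f (x + u) (ymax (x + u))
      ≤ f x (ymax x) + ⟪gradx f x yh, u⟫ + (l / 2 + 4 * (l ^ 2 / μ)) * ‖u‖ ^ 2 := by
  obtain ⟨yh', hyh', hd⟩ := hf.exists_eq_and_mul_norm_sub_sq_le hl hμ hymax hPL (x + u) yh
  have hup := (abs_le.1 (hf.abs_sub_sub_inner_gradx_le hl.le x u yh')).2
  have hlow := (abs_le.1 (hf.abs_sub_sub_inner_gradx_le hl.le x u yh)).1
  have hcross : ⟪gradx f x yh', u⟫ ≤ ⟪gradx f x yh, u⟫ + l * ‖yh - yh'‖ * ‖u‖ := by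
    have h := (real_inner_le_norm (gradx f x yh' - gradx f x yh) u).trans
      (mul_le_mul_of_nonneg_right (hf.norm_gradx_sub_le hl.le x x yh' yh) (norm_nonneg u))
    rw [inner_sub_left, sub_self, norm_zero, zero_add, norm_sub_rev] at h
    linarith
  have hgap : f (x + u) (ymax (x + u)) - f (x + u) yh ≤ l * ‖yh - yh'‖ * ‖u‖ + l * ‖u‖ ^ 2 := by
    linarith [hymax x yh']
  have hdist : μ * ‖yh - yh'‖ ≤ 4 * (l * ‖u‖) := by
    have hA : 0 ≤ l * ‖u‖ := by positivity
    have hD : 0 ≤ μ * ‖yh - yh'‖ := by positivity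
    nlinarith [mul_le_mul_of_nonneg_left hgap hμ.le, mul_le_mul_of_nonneg_right hμl
      (mul_nonneg hl.le (sq_nonneg ‖u‖))]
  have hcross' : l * ‖yh - yh'‖ * ‖u‖ ≤ 4 * (l ^ 2 / μ) * ‖u‖ ^ 2 := by
    rw [mul_div_assoc', div_mul_eq_mul_div, le_div_iff₀ hμ]
    nlinarith [mul_le_mul_of_nonneg_left hdist (mul_nonneg hl.le (norm_nonneg u))]
  linarith [hymax x yh']

theorem apply_ymax_sub_smul_gradx_le (hf : IsLSmooth l f) (hl : 0 < l) {μ : ℝ} (hμ : 0 < μ)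
    (hμl : μ ≤ l) {ymax : E → F} (hymax : ∀ x y, f x y ≤ f x (ymax x))
    (hPL : ∀ x y, 2 * μ * (f x (ymax x) - f x y) ≤ ‖grady f x y‖ ^ 2)
    {η : ℝ} (hη : 0 ≤ η) (x : E) (y : F) :
    f (x - η • gradx f x y) (ymax (x - η • gradx f x y))
      ≤ f x (ymax x) - 3 / 4 * η * ‖gradx f x y‖ ^ 2
        + (l / 2 + 4 * (l ^ 2 / μ)) * η ^ 2 * ‖gradx f x y‖ ^ 2
        + 3 * (l ^ 2 / μ) * η * (f x (ymax x) - f x y) := by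
  obtain ⟨yh, hyh, hd⟩ := hf.exists_eq_and_mul_norm_sub_sq_le hl hμ hymax hPL x y
  have h := hf.apply_ymax_add_le hl hμ hμl hymax hPL hyh (-(η • gradx f x y))
  rw [← sub_eq_add_neg, norm_neg, norm_smul, Real.norm_of_nonneg hη, inner_neg_right,
    real_inner_smul_right] at h
  have hcross : ‖gradx f x y‖ ^ 2 - l * ‖y - yh‖ * ‖gradx f x y‖ ≤ ⟪gradx f x yh, gradx f x y⟫ := by
    have h := (real_inner_le_norm (gradx f x y - gradx f x yh) (gradx f x y)).trans
      (mul_le_mul_of_nonneg_right (hf.norm_gradx_sub_le hl.le x x y yh) (norm_nonneg _))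
    rw [inner_sub_left, real_inner_self_eq_norm_sq, sub_self, norm_zero, zero_add] at h
    linarith
  have hamgm : l * ‖y - yh‖ * ‖gradx f x y‖ ≤ l ^ 2 * ‖y - yh‖ ^ 2 + ‖gradx f x y‖ ^ 2 / 4 := by
    nlinarith [sq_nonneg (l * ‖y - yh‖ - ‖gradx f x y‖ / 2)]
  have hqg : l ^ 2 * ‖y - yh‖ ^ 2 ≤ 3 * (l ^ 2 / μ) * (f x (ymax x) - f x y) := by
    rw [mul_div_assoc', div_mul_eq_mul_div, le_div_iff₀ hμ]
    nlinarith [mul_le_mul_of_nonneg_left hd (sq_nonneg l)]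
  nlinarith [mul_le_mul_of_nonneg_left (hcross.trans' (by linarith [hamgm, hqg] :
    3 / 4 * ‖gradx f x y‖ ^ 2 - 3 * (l ^ 2 / μ) * (f x (ymax x) - f x y)
      ≤ ‖gradx f x y‖ ^ 2 - l * ‖y - yh‖ * ‖gradx f x y‖)) hη]

theorem lyapunov_gda_step_le (hf : IsLSmooth l f) (hl : 0 < l) {μ₁ μ₂ ηx ηy Φstar : ℝ}
    (hμ₁l : μ₁ ≤ l) (hμ₂ : 0 < μ₂) (hμ₂l : μ₂ ≤ l)
    {ymax : E → F} (hymax : ∀ x y, f x y ≤ f x (ymax x))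
    (hPLx : ∀ x y, 2 * μ₁ * (f x y - Φstar) ≤ ‖gradx f x y‖ ^ 2)
    (hPLy : ∀ x y, 2 * μ₂ * (f x (ymax x) - f x y) ≤ ‖grady f x y‖ ^ 2)
    (hηx : 0 ≤ ηx) (hηy : 0 ≤ ηy) (hlηy : l * ηy ≤ 1 / 4) (hl2ηx : l ^ 2 * ηx ≤ ηy * μ₂ ^ 2 / 64)
    (x : E) (y : F) :
    lyapunov f ymax Φstar (x - ηx • gradx f x y) (y + ηy • grady f x y)
      ≤ (1 - ηx * μ₁ / 16) * lyapunov f ymax Φstar x y := by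
  have hlηx : l * ηx ≤ ηy * μ₂ / 64 := by
    nlinarith [mul_le_mul_of_nonneg_left hμ₂l (by positivity : 0 ≤ ηy * μ₂)]
  have hl2ηx' : l ^ 2 / μ₂ * ηx ≤ ηy * μ₂ / 64 := by
    rw [div_mul_eq_mul_div, div_le_iff₀ hμ₂]; linarith
  have hsmall : ηy * μ₂ / 64 ≤ 1 / 256 := by nlinarith [mul_le_mul_of_nonneg_left hμ₂l hηy]
  have hηxμ₁ : ηx * μ₁ ≤ ηy * μ₂ / 64 := by nlinarith [mul_le_mul_of_nonneg_left hμ₁l hηx]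
  have hdesc := hf.le_apply_add_add hl.le x (-(ηx • gradx f x y)) y (ηy • grady f x y)
  rw [← sub_eq_add_neg, inner_neg_right, real_inner_smul_right, real_inner_smul_right,
    real_inner_self_eq_norm_sq, real_inner_self_eq_norm_sq, norm_neg, norm_smul, norm_smul,
    Real.norm_of_nonneg hηx, Real.norm_of_nonneg hηy, mul_pow, mul_pow] at hdesc
  have hΦ := hf.apply_ymax_sub_smul_gradx_le hl hμ₂ hμ₂l hymax hPLy hηx x y
  have ha : 0 ≤ ηx * ‖gradx f x y‖ ^ 2 := by positivity
  have hb : 0 ≤ ηy * ‖grady f x y‖ ^ 2 := by positivity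
  have hΔ : 0 ≤ f x (ymax x) - f x y := sub_nonneg.2 (hymax x y)
  -- With `A = ηx‖∇ₓf‖²`, `B = ηy‖∇_y f‖²`, `Δ = Φ(x) - f(x, y)`, the two bounds give
  -- `W' - W ≤ -(118/256) A - (3/4) B + (3/32) ηy μ₂ Δ`; PL turns `A` and `B` into multiples of `W`.
  unfold lyapunov
  linarith [mul_le_mul_of_nonneg_right (hlηx.trans hsmall) ha, mul_le_mul_of_nonneg_right hlηy hb,
    mul_le_mul_of_nonneg_right (hl2ηx'.trans hsmall) ha, mul_le_mul_of_nonneg_right hl2ηx' hΔ,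
    mul_le_mul_of_nonneg_left (hPLx x y) hηx, mul_le_mul_of_nonneg_left (hPLy x y) hηy,
    mul_le_mul_of_nonneg_right hηxμ₁ hΔ]

end IsLSmooth

/-- linear contraction of GDA under the two-sided PL condition: with
`0 < μ₁, μ₂ ≤ l`, `0 < η_y ≤ 1/(4l)`, `η_x = η_y μ₂²/(64l²)`, the Lyapunov function
`W(x,y) = 2Φ(x) − f(x,y) − Φ*` (where `Φ(x) = max_y f(x,y) = f(x, ymax x)` and
`Φ* = inf_x Φ(x)`) contracts by a factor `1 − η_x μ₁/16` per GDA step, and hence the GDA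
iterates satisfy `W(x_t,y_t) ≤ (1 − η_x μ₁/16)^t W(x₀,y₀)`. -/
theorem statement19 {d1 d2 : ℕ} (l μ₁ μ₂ ηx ηy : ℝ) (hl : 0 < l)
    (hμ₁ : 0 < μ₁) (hμ₁l : μ₁ ≤ l) (hμ₂ : 0 < μ₂) (hμ₂l : μ₂ ≤ l)
    (f : EuclideanSpace ℝ (Fin d1) → EuclideanSpace ℝ (Fin d2) → ℝ)
    (hf : IsLSmooth l f)
    -- two-sided PL condition: the extrema are attained at `xmin y` and `ymax x`, and
    -- `‖∇_x f(x,y)‖² ≥ 2μ₁(f(x,y) − min_x f(x,y))`, `‖∇_y f(x,y)‖² ≥ 2μ₂(max_y f(x,y) − f(x,y))`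
    (xmin : EuclideanSpace ℝ (Fin d2) → EuclideanSpace ℝ (Fin d1))
    (hxmin : ∀ y x, f (xmin y) y ≤ f x y)
    (ymax : EuclideanSpace ℝ (Fin d1) → EuclideanSpace ℝ (Fin d2))
    (hymax : ∀ x y, f x y ≤ f x (ymax x))
    (hPLx : ∀ x y, 2 * μ₁ * (f x y - f (xmin y) y) ≤ ‖gradx f x y‖ ^ 2)
    (hPLy : ∀ x y, 2 * μ₂ * (f x (ymax x) - f x y) ≤ ‖grady f x y‖ ^ 2)
    -- `Φ* = inf_x Φ(x) > −∞` where `Φ(x) = max_y f(x,y) = f(x, ymax x)`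
    (Φstar : ℝ) (hΦstar : IsGLB (Set.range fun x => f x (ymax x)) Φstar)
    -- step sizes
    (hηy : 0 < ηy) (hηy' : ηy ≤ 1 / (4 * l)) (hηx : ηx = ηy * μ₂ ^ 2 / (64 * l ^ 2)) :
    -- one-step contraction of `W(x,y) = 2Φ(x) − f(x,y) − Φ*`
    (∀ (x : EuclideanSpace ℝ (Fin d1)) (y : EuclideanSpace ℝ (Fin d2)),
      2 * f (x - ηx • gradx f x y) (ymax (x - ηx • gradx f x y))
          - f (x - ηx • gradx f x y) (y + ηy • grady f x y) - Φstar
        ≤ (1 - ηx * μ₁ / 16) * (2 * f x (ymax x) - f x y - Φstar)) ∧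
    -- consequently, the GDA iterates contract geometrically
    (∀ (X : ℕ → EuclideanSpace ℝ (Fin d1)) (Yt : ℕ → EuclideanSpace ℝ (Fin d2)),
      (∀ t, X (t + 1) = X t - ηx • gradx f (X t) (Yt t)) →
      (∀ t, Yt (t + 1) = Yt t + ηy • grady f (X t) (Yt t)) →
      ∀ t : ℕ,
        2 * f (X t) (ymax (X t)) - f (X t) (Yt t) - Φstar
          ≤ (1 - ηx * μ₁ / 16) ^ t * (2 * f (X 0) (ymax (X 0)) - f (X 0) (Yt 0) - Φstar)) := by
  have hPLx' : ∀ x y, 2 * μ₁ * (f x y - Φstar) ≤ ‖gradx f x y‖ ^ 2 := fun x y => by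
    have hlow : f (xmin y) y ≤ Φstar :=
      hΦstar.2 (by rintro _ ⟨x', rfl⟩; exact (hxmin y x').trans (hymax x' y))
    nlinarith [hPLx x y]
  have hηx0 : 0 ≤ ηx := by rw [hηx]; positivity
  have hlηy : l * ηy ≤ 1 / 4 := by rw [le_div_iff₀ (by positivity)] at hηy'; linarith
  have hl2ηx : l ^ 2 * ηx ≤ ηy * μ₂ ^ 2 / 64 := by rw [hηx]; field_simp; rfl
  have hstep := hf.lyapunov_gda_step_le hl hμ₁l hμ₂ hμ₂l hymax hPLx' hPLy hηx0 hηy.le hlηy hl2ηx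
  have hρ : 0 ≤ 1 - ηx * μ₁ / 16 := by
    nlinarith [mul_le_mul_of_nonneg_left hμ₁l hηx0, mul_le_mul_of_nonneg_left hμ₂l hηy.le]
  refine ⟨hstep, fun X Yt hX hY t =>
    le_geom (u := fun t => lyapunov f ymax Φstar (X t) (Yt t)) hρ t fun k _ => ?_⟩
  rw [hX k, hY k]
  exact hstep _ _
end
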